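/- Let ρ₁, ρ₂ be finite positive Borel measures on the circle Λ, absolutely continuous with respect to Haar measure, with ρ₁(Λ) ≤ ρ₂(Λ). If l, r ∈ Λ are such that l ∉ 𝒥, r ∉ 𝒥, and the open arc (l,r) is contained in 𝒥, then ρ₁([l,r]) = ρ₂([l,r]); that is, the excess of ρ₁ over each connected component of 𝒥 vanishes. -/

import Mathlib

/-!
Measure angles from `l` and let `F t` be the excess of `ρ₁` over `ρ₂` on the arc `[l, l + t]`;
absolute continuity makes `F` continuous. Take `v = l + s` in `(l, r)` and a witness `u` of
`v ∈ 𝒥`. If `u ∈ [l, v]`, then `E(u, v) = F s - F t > 0` with `t < s` the angle of `u`. Otherwise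
`[u, v]` is `[u, l]` followed by `[l, v]`, and `E(u, l) ≤ 0` because `l ∉ 𝒥`, so `F 0 < F s`.
Either way `F` takes a smaller value to the left of every interior point, so a continuous `F`
cannot fall below `F 0` on `[0, θ]`, `θ` the angle of `r`. Hence `E(l, r) = F θ - F 0 ≥ 0`,
while `r ∉ 𝒥` gives `E(l, r) ≤ 0`.
-/

open MeasureTheory Set Filter Topology

noncomputable section

instance fact01 : Fact ((0:ℝ) < 1) := ⟨zero_lt_one⟩

/-- The circle `ℝ/ℤ`. -/
abbrev Circle' : Type := AddCircle (1:ℝ)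

/-- The angular position of `w` in the arc starting at `u`, measured positively;
a real number in `[0,1)`. -/
noncomputable def theta (u w : Circle') : ℝ := ((AddCircle.equivIco 1 0) (w - u) : ℝ)

/-- The closed arc `[u,v]` from `u` to `v` in the positive direction. -/
def arcCC (u v : Circle') : Set Circle' := {w | theta u w ≤ theta u v}

/-- The half-open arc `(u,v]`. -/
def arcOC (u v : Circle') : Set Circle' := {w | 0 < theta u w ∧ theta u w ≤ theta u v}

/-- The half-open arc `[u,v)`. -/
def arcCO (u v : Circle') : Set Circle' := {w | theta u w < theta u v}

/-- The open arc `(u,v)`. -/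
def arcOO (u v : Circle') : Set Circle' := {w | 0 < theta u w ∧ theta u w < theta u v}

/-- The excess `E(u,v) = ρ₁([u,v]) - ρ₂([u,v])`. -/
noncomputable def excess (ρ₁ ρ₂ : Measure Circle') (u v : Circle') : ℝ :=
  (ρ₁ (arcCC u v)).toReal - (ρ₂ (arcCC u v)).toReal

/-- The flux `J(v) = sup_u max (E(u,v)) 0`. -/
noncomputable def flux (ρ₁ ρ₂ : Measure Circle') (v : Circle') : ℝ :=
  ⨆ u : Circle', max (excess ρ₁ ρ₂ u v) 0

/-- The set `𝒥 = {v | ∃ u, E(u,v) > 0}`. -/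
def Jset (ρ₁ ρ₂ : Measure Circle') : Set Circle' := {v | ∃ u : Circle', 0 < excess ρ₁ ρ₂ u v}

theorem ContinuousOn.le_of_forall_exists_lt_left {α β : Type*} [ConditionallyCompleteLinearOrder α]
    [TopologicalSpace α] [OrderTopology α] [DenselyOrdered α] [LinearOrder β]
    [TopologicalSpace β] [OrderClosedTopology β] {f : α → β} {a b : α}
    (hf : ContinuousOn f (Icc a b)) (hab : a ≤ b)
    (h : ∀ s ∈ Ioo a b, ∃ t ∈ Ico a s, f t < f s) : f a ≤ f b := by
  rcases hab.eq_or_lt with rfl | hab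
  · exact le_rfl
  have hIoo : ∀ c ∈ Ioo a b, f a ≤ f c := by
    intro c hc
    obtain ⟨x, hx, hmin⟩ := isCompact_Icc.exists_isMinOn (nonempty_Icc.2 hc.1.le)
      (hf.mono (Icc_subset_Icc_right hc.2.le))
    rcases hx.1.eq_or_lt with rfl | hax
    · exact hmin (right_mem_Icc.2 hc.1.le)
    obtain ⟨t, ht, hlt⟩ := h x ⟨hax, hx.2.trans_lt hc.2⟩
    exact absurd (hmin ⟨ht.1, ht.2.le.trans hx.2⟩) hlt.not_ge
  rw [← closure_Ioo hab.ne] at hf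
  exact le_on_closure hIoo continuousOn_const hf (closure_Ioo hab.ne ▸ right_mem_Icc.2 hab.le)

section MeasureReal

variable (ν : Measure ℝ) [IsFiniteMeasure ν]

theorem measureReal_Iic_sub_Iic {a b : ℝ} (hab : a ≤ b) :
    ν.real (Iic b) - ν.real (Iic a) = ν.real (Ioc a b) := by
  rw [← Iic_union_Ioc_eq_Iic hab, measureReal_union (Iic_disjoint_Ioc le_rfl) measurableSet_Ioc]
  ring

theorem measureReal_Icc_eq_sub [NullSingletonClass ν] {a b : ℝ} (hab : a ≤ b) :
    ν.real (Icc a b) = ν.real (Iic b) - ν.real (Iic a) := by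
  rw [measureReal_Iic_sub_Iic ν hab, measureReal_congr Ioc_ae_eq_Icc]

theorem continuous_measureReal_Iic [NullSingletonClass ν] : Continuous fun t => ν.real (Iic t) := by
  refine continuous_iff_continuousAt.2 fun b => ?_
  have hsmall : Tendsto (fun x => ν.real (Icc (b - |x - b|) (b + |x - b|))) (𝓝 b) (𝓝 0) := by
    have hdist : Tendsto (fun x : ℝ => |x - b|) (𝓝 b) (𝓝 0) := by
      simpa using (continuous_sub_right b).abs.tendsto b
    exact ((ENNReal.tendsto_toReal ENNReal.zero_ne_top).comp (tendsto_measure_Icc ν b)).comp hdist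
  rw [ContinuousAt, tendsto_iff_norm_sub_tendsto_zero]
  refine squeeze_zero (fun _ => norm_nonneg _) (fun x => ?_) hsmall
  rw [Real.norm_eq_abs]
  rcases le_total b x with h | h
  · rw [measureReal_Iic_sub_Iic ν h, abs_of_nonneg measureReal_nonneg, abs_of_nonneg (by linarith)]
    exact measureReal_mono fun y hy => ⟨by linarith [hy.1], by linarith [hy.2]⟩
  · rw [abs_sub_comm, measureReal_Iic_sub_Iic ν h, abs_of_nonneg measureReal_nonneg,
      abs_of_nonpos (by linarith)]
    exact measureReal_mono fun y hy => ⟨by linarith [hy.1], by linarith [hy.2]⟩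

end MeasureReal

instance AddCircle.nullSingletonClass_volume (T : ℝ) [Fact (0 < T)] :
    NullSingletonClass (volume : Measure (AddCircle T)) where
  measure_singleton x := by
    have h : volume {x} ≤ volume (Metric.closedBall x 0) := measure_mono (by simp)
    rw [AddCircle.volume_closedBall] at h
    simpa using h

theorem theta_mem_Ico (l w : Circle') : theta l w ∈ Ico (0 : ℝ) 1 := by
  simpa [theta] using ((AddCircle.equivIco 1 0) (w - l)).2

theorem coe_theta (l w : Circle') : ((theta l w : ℝ) : Circle') = w - l :=
  AddCircle.coe_equivIco

theorem theta_add_coe (l : Circle') {t : ℝ} (ht : t ∈ Ico (0 : ℝ) 1) : theta l (l + t) = t := by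
  rw [theta, add_sub_cancel_left, AddCircle.equivIco_coe_of_mem (by simpa using ht)]

theorem theta_self (l : Circle') : theta l l = 0 := by
  simpa using theta_add_coe l (t := 0) ⟨le_rfl, one_pos⟩

theorem theta_injective (l : Circle') : Function.Injective (theta l) := fun w w' h => by
  simpa [coe_theta] using congrArg ((↑) : ℝ → Circle') h

theorem measurable_theta (l : Circle') : Measurable (theta l) :=
  measurable_subtype_coe.comp ((AddCircle.measurableEquivIco 1 0).measurable.comp
    (measurable_id.sub_const l))

theorem theta_eq_fract (l u w : Circle') : theta u w = Int.fract (theta l w - theta l u) := by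
  have hcoe : w - u = ((theta l w - theta l u : ℝ) : Circle') := by
    rw [AddCircle.coe_sub, coe_theta, coe_theta]; abel
  rw [theta, hcoe, AddCircle.coe_equivIco_mk_apply]
  simp

theorem theta_eq_sub (l u w : Circle') (h : theta l u ≤ theta l w) :
    theta u w = theta l w - theta l u := by
  obtain ⟨hu₀, hu₁⟩ := theta_mem_Ico l u
  obtain ⟨hw₀, hw₁⟩ := theta_mem_Ico l w
  rw [theta_eq_fract l, Int.fract_eq_iff]
  exact ⟨by linarith, by linarith, 0, by simp⟩

theorem theta_eq_sub_add_one (l u w : Circle') (h : theta l w < theta l u) :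
    theta u w = theta l w - theta l u + 1 := by
  obtain ⟨hu₀, hu₁⟩ := theta_mem_Ico l u
  obtain ⟨hw₀, hw₁⟩ := theta_mem_Ico l w
  rw [theta_eq_fract l, Int.fract_eq_iff]
  exact ⟨by linarith, by linarith, -1, by simp⟩

theorem arcCC_eq_preimage_Icc (l u v : Circle') (h : theta l u ≤ theta l v) :
    arcCC u v = theta l ⁻¹' Icc (theta l u) (theta l v) := by
  ext w
  obtain ⟨-, hv⟩ := theta_mem_Ico l v
  obtain ⟨hw₀, -⟩ := theta_mem_Ico l w
  simp only [arcCC, mem_ofPred_eq, mem_preimage, mem_Icc, theta_eq_sub l u v h]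
  rcases le_or_gt (theta l u) (theta l w) with hw | hw
  · rw [theta_eq_sub l u w hw]
    exact ⟨fun h' => ⟨hw, by linarith⟩, fun h' => by linarith [h'.2]⟩
  · rw [theta_eq_sub_add_one l u w hw]
    exact ⟨fun h' => by linarith, fun h' => by linarith [h'.1]⟩

theorem arcCC_eq_preimage_Iic_union_Ici (l u v : Circle') (h : theta l v < theta l u) :
    arcCC u v = theta l ⁻¹' (Iic (theta l v) ∪ Ici (theta l u)) := by
  ext w
  obtain ⟨hv₀, -⟩ := theta_mem_Ico l v
  obtain ⟨-, hw₁⟩ := theta_mem_Ico l w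
  simp only [arcCC, mem_ofPred_eq, mem_preimage, mem_union, mem_Iic, mem_Ici,
    theta_eq_sub_add_one l u v h]
  rcases le_or_gt (theta l u) (theta l w) with hw | hw
  · rw [theta_eq_sub l u w hw]
    exact ⟨fun _ => Or.inr hw, fun _ => by linarith⟩
  · rw [theta_eq_sub_add_one l u w hw]
    exact ⟨fun h' => Or.inl (by linarith),
      fun h' => h'.elim (fun h' => by linarith) fun h' => by linarith⟩

theorem nullSingletonClass_map_theta {ρ : Measure Circle'} (hac : ρ ≪ volume) (l : Circle') :
    NullSingletonClass (ρ.map (theta l)) where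
  measure_singleton t := by
    rw [Measure.map_apply (measurable_theta l) (measurableSet_singleton t)]
    exact hac ((subsingleton_singleton.preimage (theta_injective l)).measure_zero _)

section ArcMeasure

variable (ρ : Measure Circle') [IsFiniteMeasure ρ] (l : Circle') {u v : Circle'}

theorem measureReal_arcCC_of_theta_le (hac : ρ ≪ volume) (h : theta l u ≤ theta l v) :
    ρ.real (arcCC u v) =
      (ρ.map (theta l)).real (Iic (theta l v)) - (ρ.map (theta l)).real (Iic (theta l u)) := by
  have := nullSingletonClass_map_theta hac l
  rw [arcCC_eq_preimage_Icc l u v h, ← map_measureReal_apply (measurable_theta l) measurableSet_Icc,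
    measureReal_Icc_eq_sub _ h]

theorem measureReal_arcCC_of_theta_lt (h : theta l v < theta l u) :
    ρ.real (arcCC u v) =
      (ρ.map (theta l)).real (Iic (theta l v)) + (ρ.map (theta l)).real (Ici (theta l u)) := by
  rw [arcCC_eq_preimage_Iic_union_Ici l u v h,
    ← map_measureReal_apply (measurable_theta l) (measurableSet_Iic.union measurableSet_Ici),
    measureReal_union (Ici_disjoint_Iic.2 h.not_ge).symm measurableSet_Ici]

end ArcMeasure

/-- `ρ₁ - ρ₂` on the arc `[l, l + t]`, for `0 ≤ t < 1`. -/
def cumulativeExcess (ρ₁ ρ₂ : Measure Circle') (l : Circle') (t : ℝ) : ℝ :=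
  (ρ₁.map (theta l)).real (Iic t) - (ρ₂.map (theta l)).real (Iic t)

theorem excess_nonpos_of_notMem_Jset {ρ₁ ρ₂ : Measure Circle'} {v : Circle'}
    (hv : v ∉ Jset ρ₁ ρ₂) (u : Circle') : excess ρ₁ ρ₂ u v ≤ 0 :=
  not_lt.1 fun h => hv ⟨u, h⟩

section Excess

variable {ρ₁ ρ₂ : Measure Circle'} [IsFiniteMeasure ρ₁] [IsFiniteMeasure ρ₂] {l u v : Circle'}

theorem continuous_cumulativeExcess (hac₁ : ρ₁ ≪ volume) (hac₂ : ρ₂ ≪ volume) (l : Circle') :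
    Continuous (cumulativeExcess ρ₁ ρ₂ l) := by
  have := nullSingletonClass_map_theta hac₁ l
  have := nullSingletonClass_map_theta hac₂ l
  exact (continuous_measureReal_Iic _).sub (continuous_measureReal_Iic _)

theorem excess_eq_cumulativeExcess_sub (hac₁ : ρ₁ ≪ volume) (hac₂ : ρ₂ ≪ volume)
    (h : theta l u ≤ theta l v) :
    excess ρ₁ ρ₂ u v =
      cumulativeExcess ρ₁ ρ₂ l (theta l v) - cumulativeExcess ρ₁ ρ₂ l (theta l u) := by
  rw [excess, ← measureReal_def, ← measureReal_def, measureReal_arcCC_of_theta_le ρ₁ l hac₁ h,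
    measureReal_arcCC_of_theta_le ρ₂ l hac₂ h, cumulativeExcess, cumulativeExcess]
  ring

theorem excess_eq_cumulativeExcess_add (h : theta l v < theta l u) :
    excess ρ₁ ρ₂ u v = cumulativeExcess ρ₁ ρ₂ l (theta l v) +
      ((ρ₁.map (theta l)).real (Ici (theta l u)) - (ρ₂.map (theta l)).real (Ici (theta l u))) := by
  rw [excess, ← measureReal_def, ← measureReal_def, measureReal_arcCC_of_theta_lt ρ₁ l h,
    measureReal_arcCC_of_theta_lt ρ₂ l h, cumulativeExcess]
  ring

theorem exists_cumulativeExcess_lt_of_mem_Jset (hac₁ : ρ₁ ≪ volume) (hac₂ : ρ₂ ≪ volume)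
    (hl : l ∉ Jset ρ₁ ρ₂) (hv : v ∈ Jset ρ₁ ρ₂) (hv₀ : 0 < theta l v) :
    ∃ t ∈ Ico 0 (theta l v), cumulativeExcess ρ₁ ρ₂ l t < cumulativeExcess ρ₁ ρ₂ l (theta l v) := by
  obtain ⟨u, hu⟩ := hv
  rcases le_or_gt (theta l u) (theta l v) with huv | hvu
  · rw [excess_eq_cumulativeExcess_sub hac₁ hac₂ huv] at hu
    have hne : theta l u ≠ theta l v := fun h => by rw [h, sub_self] at hu; exact hu.false
    exact ⟨theta l u, ⟨(theta_mem_Ico l u).1, huv.lt_of_ne hne⟩, by linarith⟩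
  · have hul := excess_nonpos_of_notMem_Jset hl u
    rw [excess_eq_cumulativeExcess_add (theta_self l ▸ hv₀.trans hvu), theta_self] at hul
    rw [excess_eq_cumulativeExcess_add hvu] at hu
    exact ⟨0, ⟨le_rfl, hv₀⟩, by linarith⟩

end Excess

theorem stmt8_general (ρ₁ ρ₂ : Measure Circle') [IsFiniteMeasure ρ₁] [IsFiniteMeasure ρ₂]
    (hac₁ : ρ₁ ≪ (volume : Measure Circle')) (hac₂ : ρ₂ ≪ (volume : Measure Circle'))
    (l r : Circle') (hl : l ∉ Jset ρ₁ ρ₂) (hr : r ∉ Jset ρ₁ ρ₂)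
    (hsub : arcOO l r ⊆ Jset ρ₁ ρ₂) :
    ρ₁ (arcCC l r) = ρ₂ (arcCC l r) := by
  set F := cumulativeExcess ρ₁ ρ₂ l
  obtain ⟨hr₀, hr₁⟩ := theta_mem_Ico l r
  have hlr : excess ρ₁ ρ₂ l r = F (theta l r) - F 0 := by
    rw [excess_eq_cumulativeExcess_sub hac₁ hac₂ ((theta_self l).trans_le hr₀), theta_self]
  have hle := excess_nonpos_of_notMem_Jset hr l
  have hge : F 0 ≤ F (theta l r) := by
    refine (continuous_cumulativeExcess hac₁ hac₂ l).continuousOn.le_of_forall_exists_lt_left hr₀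
      fun s hs => ?_
    have hv : theta l (l + s) = s := theta_add_coe l ⟨hs.1.le, hs.2.trans hr₁⟩
    have hv₀ : 0 < theta l (l + s) := by rw [hv]; exact hs.1
    have hvJ : l + s ∈ Jset ρ₁ ρ₂ := hsub ⟨hv₀, by rw [hv]; exact hs.2⟩
    simpa only [hv] using exists_cumulativeExcess_lt_of_mem_Jset hac₁ hac₂ hl hvJ hv₀
  have hzero : excess ρ₁ ρ₂ l r = 0 := by linarith
  exact (ENNReal.toReal_eq_toReal_iff' (measure_ne_top _ _) (measure_ne_top _ _)).1
    (sub_eq_zero.1 hzero)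

/-- for absolutely continuous `ρ₁, ρ₂`, the excess vanishes over each
connected component of `𝒥`: if `l, r ∉ 𝒥` and the open arc `(l,r)` is contained in
`𝒥`, then `ρ₁([l,r]) = ρ₂([l,r])`. -/
theorem stmt8 (ρ₁ ρ₂ : Measure Circle') [IsFiniteMeasure ρ₁] [IsFiniteMeasure ρ₂]
    (hac₁ : ρ₁ ≪ (volume : Measure Circle')) (hac₂ : ρ₂ ≪ (volume : Measure Circle'))
    (hmass : ρ₁ Set.univ ≤ ρ₂ Set.univ)
    (l r : Circle') (hl : l ∉ Jset ρ₁ ρ₂) (hr : r ∉ Jset ρ₁ ρ₂)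
    (hsub : arcOO l r ⊆ Jset ρ₁ ρ₂) :
    ρ₁ (arcCC l r) = ρ₂ (arcCC l r) :=
  stmt8_general ρ₁ ρ₂ hac₁ hac₂ l r hl hr hsub

end
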